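/- Let n ≥ 4 and 0 < ε < 1, and consider the star Minimum Multicut instance I(n,ε): vertices s₁,…,s_{n−1}, u; terminal pairs all {s_i, s_j} with i ≠ j; edges (u,s₁) of weight n−2−ε/2 and (u,s_i) of weight 1 for 2 ≤ i ≤ n−1. Let E* = {(u,s_i) : 2 ≤ i ≤ n−1}. Then E* is a multicut of minimum weight n−2, and the instance is (n−2−ε)-stable: for every multicut E' ≠ E*, w(E'∖E*) > (n−2−ε)·w(E*∖E'). -/

import Mathlib

/-!
Every edge of the star is a spoke `(u, sᵢ)`, and a multicut may keep at most one spoke, since two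
kept spokes join their leaves through `u`. Every spoke weighs at least `1`, so a multicut weighs at
least `n − 2 = w(E*)`. A multicut `E' ≠ E*` must cut the heavy spoke `(u, s₁)`, so
`E' ∖ E* = {(u, s₁)}` has weight `n − 2 − ε/2`, while `E* ∖ E'` consists of at most one light
spoke and weighs at most `1`.
-/

open Finset

/-- The star graph of the Minimum Multicut instance `I(n, ε)`: vertices are
`s₁, …, s_{n−1}` (the elements `some i`, where `s₁` corresponds to `i = 0`) together
with the center `u` (the element `none`); the edges are exactly the pairs `(u, s_i)`. -/
def starGraph (n : ℕ) : SimpleGraph (Option (Fin (n - 1))) :=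
  SimpleGraph.fromRel (fun x y => x = none ∨ y = none)

/-- Edge weights of the instance `I(n, ε)`: the edge `(u, s₁)` has weight `n − 2 − ε/2`
and the edges `(u, s_i)`, `2 ≤ i ≤ n − 1`, have weight `1`; all other pairs get `0`. -/
noncomputable def starWeight (n : ℕ) (ε : ℝ) :
    Option (Fin (n - 1)) → Option (Fin (n - 1)) → ℝ
  | none, some i => if (i : ℕ) = 0 then (n : ℝ) - 2 - ε / 2 else 1
  | some i, none => if (i : ℕ) = 0 then (n : ℝ) - 2 - ε / 2 else 1
  | _, _ => 0

/-- The total weight of a set `F` of (unordered) edges of the instance `I(n, ε)`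
(the ordered double sum counts every pair twice). -/
noncomputable def starEdgesWeight (n : ℕ) (ε : ℝ)
    (F : Finset (Sym2 (Option (Fin (n - 1))))) : ℝ :=
  (∑ x, ∑ y, if s(x, y) ∈ F then starWeight n ε x y else 0) / 2

/-- `E'` is a multicut of the instance `I(n, ε)`: a set of edges of the star graph whose
removal disconnects every pair of distinct terminals `s_i, s_j`. -/
def IsStarMulticut (n : ℕ) (E' : Finset (Sym2 (Option (Fin (n - 1))))) : Prop :=
  ↑E' ⊆ (starGraph n).edgeSet ∧
  ∀ i j : Fin (n - 1), i ≠ j →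
    ¬ ((starGraph n).deleteEdges ↑E').Reachable (some i) (some j)

/-- The multicut `E* = {(u, s_i) : 2 ≤ i ≤ n − 1}`. -/
noncomputable def starEstar (n : ℕ) : Finset (Sym2 (Option (Fin (n - 1)))) :=
  have := Classical.propDecidable
  Finset.univ.filter (fun e => ∃ i : Fin (n - 1), (i : ℕ) ≠ 0 ∧ e = s(none, some i))

theorem SimpleGraph.Reachable.eq_of_forall_not_adj {V : Type*} {G : SimpleGraph V} {x y : V}
    (hxy : G.Reachable x y) (hx : ∀ z, ¬ G.Adj x z) : x = y := by
  obtain ⟨p⟩ := hxy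
  cases p with
  | nil => rfl
  | cons hadj _ => exact absurd hadj (hx _)

variable {n : ℕ} {ε : ℝ}

lemma starGraph_adj_iff {x y : Option (Fin (n - 1))} :
    (starGraph n).Adj x y ↔ x ≠ y ∧ (x = none ∨ y = none) := by
  simp only [starGraph, SimpleGraph.fromRel_adj]
  tauto

lemma exists_eq_spoke_of_mem_edgeSet {e : Sym2 (Option (Fin (n - 1)))}
    (he : e ∈ (starGraph n).edgeSet) : ∃ i, e = s(none, some i) := by
  induction e using Sym2.ind with
  | _ x y =>
    obtain ⟨hne, rfl | rfl⟩ := starGraph_adj_iff.1 he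
    · cases y with
      | none => exact absurd rfl hne
      | some i => exact ⟨i, rfl⟩
    · cases x with
      | none => exact absurd rfl hne
      | some i => exact ⟨i, Sym2.eq_swap⟩

lemma mem_starEstar {e : Sym2 (Option (Fin (n - 1)))} :
    e ∈ starEstar n ↔ ∃ i : Fin (n - 1), (i : ℕ) ≠ 0 ∧ e = s(none, some i) := by
  simp [starEstar]

lemma spoke_mem_starEstar_iff {i : Fin (n - 1)} :
    s(none, some i) ∈ starEstar n ↔ (i : ℕ) ≠ 0 := by
  simp [mem_starEstar]

lemma starEdgesWeight_eq_sum (F : Finset (Sym2 (Option (Fin (n - 1))))) :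
    starEdgesWeight n ε F = ∑ i with s(none, some i) ∈ F, starWeight n ε none (some i) := by
  have hswap : ∀ i : Fin (n - 1),
      (s(some i, none) : Sym2 (Option (Fin (n - 1)))) = s(none, some i) := fun _ => Sym2.eq_swap
  rw [sum_filter, starEdgesWeight]
  simp only [Fintype.sum_option, hswap]
  simp only [starWeight, ite_self, sum_const_zero, add_zero, zero_add]
  ring

lemma starEdgesWeight_singleton (i : Fin (n - 1)) :
    starEdgesWeight n ε {s(none, some i)} = starWeight n ε none (some i) := by
  simp only [starEdgesWeight_eq_sum, mem_singleton, Sym2.congr_right, Option.some_inj]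
  rw [filter_eq', if_pos (mem_univ _), sum_singleton]

lemma starEdgesWeight_eq_card_of_subset_starEstar {F : Finset (Sym2 (Option (Fin (n - 1))))}
    (hF : F ⊆ starEstar n) : starEdgesWeight n ε F = #{i | s(none, some i) ∈ F} := by
  rw [starEdgesWeight_eq_sum, ← Nat.smul_one_eq_cast, ← sum_const]
  refine sum_congr rfl fun i hi => ?_
  have hi0 := spoke_mem_starEstar_iff.1 (hF (mem_filter.1 hi).2)
  simp [starWeight, hi0]

lemma card_le_starEdgesWeight (hε : ε / 2 ≤ n - 3) (F : Finset (Sym2 (Option (Fin (n - 1))))) :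
    (#{i | s(none, some i) ∈ F} : ℝ) ≤ starEdgesWeight n ε F := by
  rw [starEdgesWeight_eq_sum, ← Nat.smul_one_eq_cast, ← sum_const]
  refine sum_le_sum fun i _ => ?_
  simp only [starWeight]
  split_ifs <;> linarith

lemma isStarMulticut_starEstar : IsStarMulticut n (starEstar n) := by
  refine ⟨fun e he => ?_, fun i j hij hreach => ?_⟩
  · obtain ⟨i, -, rfl⟩ := mem_starEstar.1 he
    exact starGraph_adj_iff.2 ⟨by simp, .inl rfl⟩
  have isolated : ∀ k : Fin (n - 1), (k : ℕ) ≠ 0 →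
      ∀ z, ¬ ((starGraph n).deleteEdges (starEstar n)).Adj (some k) z := by
    intro k hk z hadj
    obtain ⟨hadj, hcut⟩ := SimpleGraph.deleteEdges_adj.1 hadj
    obtain ⟨-, hz⟩ := starGraph_adj_iff.1 hadj
    obtain rfl : z = none := hz.resolve_left (Option.some_ne_none k)
    exact hcut (Sym2.eq_swap ▸ spoke_mem_starEstar_iff.2 hk)
  by_cases hi : (i : ℕ) = 0
  · have hj : (j : ℕ) ≠ 0 := fun hj => hij (Fin.ext (hi.trans hj.symm))
    exact hij (Option.some_injective _ (hreach.symm.eq_of_forall_not_adj (isolated j hj)).symm)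
  · exact hij (Option.some_injective _ (hreach.eq_of_forall_not_adj (isolated i hi)))

lemma starEdgesWeight_starEstar (hn : 2 ≤ n) : starEdgesWeight n ε (starEstar n) = n - 2 := by
  rw [starEdgesWeight_eq_card_of_subset_starEstar Subset.rfl]
  simp only [spoke_mem_starEstar_iff, ne_eq]
  have hzero : #{i : Fin (n - 1) | (i : ℕ) = 0} = 1 :=
    card_eq_one.2 ⟨⟨0, by omega⟩, by ext i; simp [Fin.ext_iff]⟩
  have hsplit := card_filter_add_card_filter_not (s := univ) fun i : Fin (n - 1) => (i : ℕ) = 0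
  rw [hzero, card_univ, Fintype.card_fin] at hsplit
  rw [show #{i : Fin (n - 1) | ¬(i : ℕ) = 0} = n - 2 by omega, Nat.cast_sub hn, Nat.cast_two]

namespace IsStarMulticut

variable {E' : Finset (Sym2 (Option (Fin (n - 1))))}

lemma spoke_mem_of_not_mem (h : IsStarMulticut n E') {i j : Fin (n - 1)} (hij : i ≠ j)
    (hi : s(none, some i) ∉ E') : s(none, some j) ∈ E' := by
  by_contra hj
  refine h.2 i j hij (SimpleGraph.Adj.reachable (v := none) ?_ |>.trans
    (SimpleGraph.Adj.reachable ?_))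
  · exact SimpleGraph.deleteEdges_adj.2 ⟨starGraph_adj_iff.2 ⟨by simp, .inr rfl⟩, by
      rwa [Sym2.eq_swap]⟩
  · exact SimpleGraph.deleteEdges_adj.2 ⟨starGraph_adj_iff.2 ⟨by simp, .inl rfl⟩, hj⟩

lemma card_spokes_not_mem_le_one (h : IsStarMulticut n E') :
    #{i | s(none, some i) ∉ E'} ≤ 1 :=
  card_le_one.2 fun i hi j hj => by
    by_contra hij
    exact (mem_filter.1 hj).2 (h.spoke_mem_of_not_mem hij (mem_filter.1 hi).2)

lemma sub_two_le_starEdgesWeight (h : IsStarMulticut n E') (hε : ε / 2 ≤ n - 3) :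
    (n : ℝ) - 2 ≤ starEdgesWeight n ε E' := by
  have hsplit := card_filter_add_card_filter_not (s := univ)
    fun i : Fin (n - 1) => s(none, some i) ∈ E'
  rw [card_univ, Fintype.card_fin] at hsplit
  have hcard : n ≤ #{i | s(none, some i) ∈ E'} + 2 := by
    have := h.card_spokes_not_mem_le_one
    omega
  have : (n : ℝ) ≤ #{i | s(none, some i) ∈ E'} + 2 := by exact_mod_cast hcard
  linarith [card_le_starEdgesWeight hε E']

lemma eq_starEstar_of_spoke_not_mem (h : IsStarMulticut n E') {i₀ : Fin (n - 1)}
    (hi₀ : (i₀ : ℕ) = 0) (h₀ : s(none, some i₀) ∉ E') : E' = starEstar n := by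
  ext e
  constructor
  · intro he
    obtain ⟨i, rfl⟩ := exists_eq_spoke_of_mem_edgeSet (h.1 he)
    refine spoke_mem_starEstar_iff.2 fun hi => h₀ ?_
    rwa [show i₀ = i from Fin.ext (hi₀.trans hi.symm)]
  · intro he
    obtain ⟨i, hi, rfl⟩ := mem_starEstar.1 he
    exact h.spoke_mem_of_not_mem (fun h' => hi (h' ▸ hi₀)) h₀

lemma sdiff_starEstar_eq_singleton (h : IsStarMulticut n E') (hne : E' ≠ starEstar n)
    {i₀ : Fin (n - 1)} (hi₀ : (i₀ : ℕ) = 0) : E' \ starEstar n = {s(none, some i₀)} := by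
  have h₀ : s(none, some i₀) ∈ E' := by
    by_contra h₀
    exact hne (h.eq_starEstar_of_spoke_not_mem hi₀ h₀)
  ext e
  rw [mem_sdiff, mem_singleton]
  constructor
  · rintro ⟨he, he'⟩
    obtain ⟨i, rfl⟩ := exists_eq_spoke_of_mem_edgeSet (h.1 he)
    have hi : (i : ℕ) = 0 := not_not.1 (mt spoke_mem_starEstar_iff.2 he')
    rw [Fin.ext (hi.trans hi₀.symm)]
  · rintro rfl
    exact ⟨h₀, fun h' => spoke_mem_starEstar_iff.1 h' hi₀⟩

lemma starEdgesWeight_starEstar_sdiff_le_one (h : IsStarMulticut n E') :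
    starEdgesWeight n ε (starEstar n \ E') ≤ 1 := by
  rw [starEdgesWeight_eq_card_of_subset_starEstar sdiff_subset, Nat.cast_le_one]
  refine (card_le_card fun i hi => ?_).trans h.card_spokes_not_mem_le_one
  simp only [mem_filter, mem_sdiff] at hi ⊢
  exact ⟨hi.1, hi.2.2⟩

end IsStarMulticut

/-- For `n ≥ 4` and `0 < ε < 1`, in the star Minimum Multicut instance
`I(n, ε)` the set `E*` is a multicut of minimum weight `n − 2`, and the instance is
`(n − 2 − ε)`-stable: for every multicut `E' ≠ E*`,
`w(E'∖E*) > (n − 2 − ε)·w(E*∖E')`. -/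
theorem stmt15 (n : ℕ) (hn : 4 ≤ n) (ε : ℝ) (hε0 : 0 < ε) (hε1 : ε < 1) :
    IsStarMulticut n (starEstar n) ∧
    starEdgesWeight n ε (starEstar n) = (n : ℝ) - 2 ∧
    (∀ E' : Finset (Sym2 (Option (Fin (n - 1)))), IsStarMulticut n E' →
      starEdgesWeight n ε (starEstar n) ≤ starEdgesWeight n ε E') ∧
    (∀ E' : Finset (Sym2 (Option (Fin (n - 1)))), IsStarMulticut n E' →
      E' ≠ starEstar n →
      ((n : ℝ) - 2 - ε) * starEdgesWeight n ε (starEstar n \ E') <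
        starEdgesWeight n ε (E' \ starEstar n)) := by
  have hn' : (4 : ℝ) ≤ n := by exact_mod_cast hn
  have hWstar := starEdgesWeight_starEstar (ε := ε) (by omega : 2 ≤ n)
  refine ⟨isStarMulticut_starEstar, hWstar, fun E' hE' => ?_, fun E' hE' hne => ?_⟩
  · exact hWstar ▸ hE'.sub_two_le_starEdgesWeight (by linarith)
  · rw [hE'.sdiff_starEstar_eq_singleton hne (i₀ := ⟨0, by omega⟩) rfl, starEdgesWeight_singleton]
    have hle := hE'.starEdgesWeight_starEstar_sdiff_le_one (ε := ε)
    have hnonneg : 0 ≤ starEdgesWeight n ε (starEstar n \ E') := by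
      rw [starEdgesWeight_eq_card_of_subset_starEstar sdiff_subset]
      positivity
    simp only [starWeight, if_true]
    nlinarith
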